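/- The Carlitz q-Eulerian polynomial C_n(x,q) = ∑_{π ∈ S_n} x^{des(π)} q^{maj(π)} satisfies C_n(x,q) = ∏_{i=0}^{n}(1-x q^i) · ∑_{j=1}^{∞} [j]_q^n x^{j-1} as formal power series in x and q. -/

import Mathlib

/-- The value `π(k+1)` (1-indexed) of a permutation of `{1, …, n}` realized as a
permutation of `Fin n`, read 0-indexed: `permVal n π k = π(k+1) - 1`. -/
def permVal (n : ℕ) (π : Equiv.Perm (Fin n)) (k : ℕ) : ℕ :=
  if h : k < n then (π ⟨k, h⟩ : ℕ) else k

/-- The descent set `D_π = {j ∈ {1, …, n-1} : π(j) > π(j+1)}`. -/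
def descSet (n : ℕ) (π : Equiv.Perm (Fin n)) : Finset ℕ :=
  (Finset.Icc 1 (n - 1)).filter fun j => permVal n π j < permVal n π (j - 1)

/-- The major index `maj(π) = ∑_{j ∈ D_π} j`. -/
def maj (n : ℕ) (π : Equiv.Perm (Fin n)) : ℕ := ∑ j ∈ descSet n π, j

/-- The number of descents `des(π) = |D_π|`. -/
def des (n : ℕ) (π : Equiv.Perm (Fin n)) : ℕ := (descSet n π).card

/-- The formal power series `∑_{j=1}^∞ [j]_q^n x^{j-1}` in `x = X 0`, `q = X 1`:
the coefficient of `x^{j-1} q^k` is the coefficient of `q^k` in `[j]_q^n`,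
where `[j]_q = 1 + q + ⋯ + q^{j-1}`. -/
noncomputable def carlitzSum (n : ℕ) : MvPowerSeries (Fin 2) ℤ :=
  fun d => ((∑ t ∈ Finset.range (d 0 + 1), (Polynomial.X : Polynomial ℤ) ^ t) ^ n).coeff (d 1)

/-!
The coefficient of `x^a q^b` in `∑_j [j]_q^n x^(j-1)` counts the sequences `f : Fin n → ℕ` with
entries at most `a` and sum `b`. Sorting `f` into weakly decreasing order, ties broken by position,
gives a permutation `π` such that `f ∘ π` decreases weakly, and strictly at each descent of `π`.
Subtracting from `f (π k)` the number of descents of `π` after position `k` turns these sequences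
bijectively into antitone sequences with entries at most `a - des π` and sum `b - maj π`.
Antitone sequences of length `n` have generating function `∏_{i=0}^n (1 - x q^i)⁻¹`: a sequence
either ends in `0`, which can be dropped, or all its entries can be lowered by one.
-/

open Finset MvPowerSeries

namespace Carlitz

theorem antitone_fin_iff_succ_le {α : Type*} [Preorder α] {n : ℕ} {u : Fin n → α} :
    Antitone u ↔ ∀ k (hk : k + 1 < n), u ⟨k + 1, hk⟩ ≤ u ⟨k, by omega⟩ := by
  cases n with
  | zero => exact ⟨fun _ k hk => by omega, fun _ i => i.elim0⟩
  | succ m =>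
    rw [Fin.antitone_iff_succ_le]
    exact ⟨fun h k hk => h ⟨k, by omega⟩, fun h i => h i (by omega)⟩

theorem strictMono_fin_iff_lt_succ {α : Type*} [Preorder α] {n : ℕ} {u : Fin n → α} :
    StrictMono u ↔ ∀ k (hk : k + 1 < n), u ⟨k, by omega⟩ < u ⟨k + 1, hk⟩ := by
  cases n with
  | zero => exact ⟨fun _ k hk => by omega, fun _ i => i.elim0⟩
  | succ m =>
    rw [Fin.strictMono_iff_lt_succ]
    exact ⟨fun h k hk => h ⟨k, by omega⟩, fun h i => h i (by omega)⟩

def boundedSeqs (n a b : ℕ) : Finset (Fin n → ℕ) :=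
  {f ∈ Fintype.piFinset fun _ => range (a + 1) | ∑ i, f i = b}

open Classical in
noncomputable def antitoneSeqs (n a b : ℕ) : Finset (Fin n → ℕ) :=
  {h ∈ boundedSeqs n a b | Antitone h}

theorem mem_boundedSeqs {n a b : ℕ} {f : Fin n → ℕ} :
    f ∈ boundedSeqs n a b ↔ (∀ i, f i ≤ a) ∧ ∑ i, f i = b := by
  simp [boundedSeqs]

theorem mem_antitoneSeqs {n a b : ℕ} {h : Fin n → ℕ} :
    h ∈ antitoneSeqs n a b ↔ Antitone h ∧ (∀ i, h i ≤ a) ∧ ∑ i, h i = b := by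
  rw [antitoneSeqs, mem_filter, mem_boundedSeqs, and_comm]

theorem card_antitoneSeqs_zero (a b : ℕ) :
    #(antitoneSeqs 0 a b) = if b = 0 then 1 else 0 := by
  split_ifs with hb
  · exact card_eq_one.2 ⟨0, by ext h; simp [mem_antitoneSeqs, hb, Subsingleton.elim h 0,
      Subsingleton.antitone]⟩
  · exact card_eq_zero.2 <| eq_empty_of_forall_notMem fun h hh =>
      hb (by simpa using (mem_antitoneSeqs.1 hh).2.2.symm)

theorem card_antitoneSeqs_last_eq_zero (n a b : ℕ) :
    #{h ∈ antitoneSeqs (n + 1) a b | h (Fin.last n) = 0} = #(antitoneSeqs n a b) := by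
  refine card_nbij' Fin.init (Fin.snoc · 0) ?_ ?_ ?_ ?_
  · intro h hh
    simp only [mem_coe, mem_filter, mem_antitoneSeqs] at hh ⊢
    obtain ⟨⟨hanti, hle, hsum⟩, hlast⟩ := hh
    refine ⟨hanti.comp_monotone Fin.strictMono_castSucc.monotone, fun i => hle _, ?_⟩
    rw [← hsum, Fin.sum_univ_castSucc, hlast, add_zero]
    rfl
  · intro g hg
    simp only [mem_coe, mem_filter, mem_antitoneSeqs] at hg ⊢
    obtain ⟨hanti, hle, hsum⟩ := hg
    refine ⟨⟨?_, fun i => Fin.lastCases (by simp) (by simp [hle]) i, by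
      simp [Fin.sum_univ_castSucc, hsum]⟩, by simp⟩
    rw [antitone_fin_iff_succ_le] at hanti ⊢
    intro k hk
    by_cases hkn : k + 1 < n
    · simpa [Fin.snoc, hkn, show k < n by omega] using hanti k hkn
    · simp [Fin.snoc, hkn]
  · intro h hh
    simp only [mem_coe, mem_filter] at hh
    simp [← hh.2]
  · intro g _
    simp

theorem one_le_of_last_ne_zero {n : ℕ} {h : Fin (n + 1) → ℕ} (hanti : Antitone h)
    (hlast : h (Fin.last n) ≠ 0) (i : Fin (n + 1)) : 1 ≤ h i :=
  (Nat.one_le_iff_ne_zero.2 hlast).trans (hanti (Fin.le_last i))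

theorem card_antitoneSeqs_last_ne_zero (n a b : ℕ) :
    #{h ∈ antitoneSeqs (n + 1) a b | h (Fin.last n) ≠ 0} =
      if 1 ≤ a ∧ n + 1 ≤ b then #(antitoneSeqs (n + 1) (a - 1) (b - (n + 1))) else 0 := by
  have sum_add_one (g : Fin (n + 1) → ℕ) : ∑ i, (g i + 1) = ∑ i, g i + (n + 1) := by
    simp [sum_add_distrib]
  split_ifs with hab
  · refine card_nbij' (· - 1) (· + 1) ?_ ?_ ?_ ?_
    · intro h hh
      simp only [mem_coe, mem_filter, mem_antitoneSeqs, Pi.sub_apply, Pi.one_apply] at hh ⊢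
      obtain ⟨⟨hanti, hle, hsum⟩, hlast⟩ := hh
      have hpos := one_le_of_last_ne_zero hanti hlast
      have hsum' := sum_add_one fun i => h i - 1
      simp only [fun i => Nat.sub_add_cancel (hpos i)] at hsum'
      exact ⟨fun i j hij => Nat.sub_le_sub_right (hanti hij) 1,
        fun i => Nat.sub_le_sub_right (hle i) 1, by omega⟩
    · intro g hg
      simp only [mem_coe, mem_filter, mem_antitoneSeqs, Pi.add_apply, Pi.one_apply] at hg ⊢
      obtain ⟨hanti, hle, hsum⟩ := hg
      refine ⟨⟨fun i j hij => Nat.add_le_add_right (hanti hij) 1,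
        fun i => by have := hle i; omega, ?_⟩, by simp⟩
      rw [sum_add_one]
      omega
    · intro h hh
      simp only [mem_coe, mem_filter, mem_antitoneSeqs] at hh
      exact funext fun i => Nat.sub_add_cancel (one_le_of_last_ne_zero hh.1.1 hh.2 i)
    · intro g _
      exact funext fun i => Nat.add_sub_cancel (g i) 1
  · refine card_eq_zero.2 <| filter_eq_empty_iff.2 fun h hh hlast => hab ?_
    obtain ⟨hanti, hle, hsum⟩ := mem_antitoneSeqs.1 hh
    have hpos := one_le_of_last_ne_zero hanti hlast
    refine ⟨(hpos 0).trans (hle 0), ?_⟩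
    calc n + 1 = ∑ _i : Fin (n + 1), 1 := by simp
      _ ≤ ∑ i, h i := sum_le_sum fun i _ => hpos i
      _ = b := hsum

theorem card_antitoneSeqs_succ (n a b : ℕ) :
    #(antitoneSeqs (n + 1) a b) = #(antitoneSeqs n a b) +
      if 1 ≤ a ∧ n + 1 ≤ b then #(antitoneSeqs (n + 1) (a - 1) (b - (n + 1))) else 0 := by
  rw [← card_antitoneSeqs_last_eq_zero n a b, ← card_antitoneSeqs_last_ne_zero,
    card_filter_add_card_filter_not]

def mk₂ {R : Type*} (g : ℕ → ℕ → R) : MvPowerSeries (Fin 2) R :=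
  fun d => g (d 0) (d 1)

theorem coeff_mk₂ {R : Type*} [Semiring R] (g : ℕ → ℕ → R) (d : Fin 2 →₀ ℕ) :
    coeff d (mk₂ g) = g (d 0) (d 1) := rfl

theorem coeff_X_pow_mul_X_pow_mul_mk₂ {R : Type*} [CommSemiring R] (g : ℕ → ℕ → R)
    (p m : ℕ) (d : Fin 2 →₀ ℕ) :
    coeff d (X 0 ^ p * X 1 ^ m * mk₂ g) =
      if p ≤ d 0 ∧ m ≤ d 1 then g (d 0 - p) (d 1 - m) else 0 := by
  rw [X_pow_eq, X_pow_eq, monomial_mul_monomial, one_mul, coeff_monomial_mul]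
  have hle : Finsupp.single 0 p + Finsupp.single 1 m ≤ d ↔ p ≤ d 0 ∧ m ≤ d 1 := by
    simp [Finsupp.le_def, Fin.forall_fin_two, Finsupp.single_apply]
  simp [hle, coeff_mk₂]

noncomputable def antitoneSeqsSeries (n : ℕ) : MvPowerSeries (Fin 2) ℤ :=
  mk₂ fun a b => #(antitoneSeqs n a b)

theorem one_sub_mul_antitoneSeqsSeries_succ (n : ℕ) :
    (1 - X 0 * X 1 ^ (n + 1)) * antitoneSeqsSeries (n + 1) = antitoneSeqsSeries n := by
  ext d
  have := coeff_X_pow_mul_X_pow_mul_mk₂ (fun a b => (#(antitoneSeqs (n + 1) a b) : ℤ)) 1 (n + 1) d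
  rw [pow_one] at this
  rw [sub_mul, one_mul, map_sub, antitoneSeqsSeries, this, coeff_mk₂, antitoneSeqsSeries,
    coeff_mk₂, card_antitoneSeqs_succ n (d 0) (d 1)]
  split_ifs <;> push_cast <;> ring

theorem one_sub_X_mul_antitoneSeqsSeries_zero :
    (1 - X 0) * antitoneSeqsSeries 0 = 1 := by
  ext d
  have := coeff_X_pow_mul_X_pow_mul_mk₂ (fun a b => (#(antitoneSeqs 0 a b) : ℤ)) 1 0 d
  rw [pow_one, pow_zero, mul_one] at this
  rw [sub_mul, one_mul, map_sub, antitoneSeqsSeries, this, coeff_mk₂, coeff_one]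
  have hd : d = 0 ↔ d 0 = 0 ∧ d 1 = 0 := by
    simp [Finsupp.ext_iff, Fin.forall_fin_two]
  simp only [card_antitoneSeqs_zero, hd]
  split_ifs <;> omega

theorem prod_one_sub_mul_antitoneSeqsSeries (n : ℕ) :
    (∏ i ∈ range (n + 1), (1 - X 0 * X 1 ^ i)) * antitoneSeqsSeries n = 1 := by
  induction n with
  | zero => simpa using one_sub_X_mul_antitoneSeqsSeries_zero
  | succ n ih => rw [prod_range_succ, mul_assoc, one_sub_mul_antitoneSeqsSeries_succ, ih]

section Descents

variable {n : ℕ} (π : Equiv.Perm (Fin n))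

theorem one_le_and_lt_of_mem_descSet {j : ℕ} (hj : j ∈ descSet n π) : 1 ≤ j ∧ j < n := by
  have := (mem_Icc.1 (mem_filter.1 hj).1)
  omega

theorem succ_mem_descSet_iff {k : ℕ} (hk : k + 1 < n) :
    k + 1 ∈ descSet n π ↔ π ⟨k + 1, hk⟩ < π ⟨k, by omega⟩ := by
  rw [descSet, mem_filter, mem_Icc, permVal, permVal, dif_pos hk, Nat.add_sub_cancel,
    dif_pos (show k < n by omega), Fin.lt_def]
  exact ⟨fun h => h.2, fun h => ⟨⟨by omega, by omega⟩, h⟩⟩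

-- Positions are 0-based: `j ∈ descSet n π` is a descent between positions `j - 1` and `j`.
def descentsAfter (k : ℕ) : ℕ := #{j ∈ descSet n π | k < j}

theorem descentsAfter_eq_succ_add (k : ℕ) :
    descentsAfter π k = descentsAfter π (k + 1) + if k + 1 ∈ descSet n π then 1 else 0 := by
  rw [descentsAfter, descentsAfter, ← card_filter_add_card_filter_not (p := (k + 1 < ·))]
  congr 1
  · rw [filter_filter]
    exact congrArg card (filter_congr fun j _ => by omega)
  · rw [filter_filter, filter_congr (q := (· = k + 1)) fun j _ => by omega, filter_eq']
    split_ifs <;> simp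

theorem descentsAfter_zero : descentsAfter π 0 = des n π := by
  rw [descentsAfter, des]
  congr 1
  exact filter_true_of_mem fun j hj => (one_le_and_lt_of_mem_descSet π hj).1

theorem descentsAfter_le_des (k : ℕ) : descentsAfter π k ≤ des n π := card_filter_le _ _

theorem descentsAfter_eq_zero {k : ℕ} (hk : n ≤ k + 1) : descentsAfter π k = 0 :=
  card_eq_zero.2 <| filter_false_of_mem fun j hj => by have := one_le_and_lt_of_mem_descSet π hj; omega

theorem sum_descentsAfter : ∑ k : Fin n, descentsAfter π k = maj n π := by
  simp only [descentsAfter, card_filter]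
  rw [sum_comm, maj]
  refine sum_congr rfl fun j hj => ?_
  have hj := one_le_and_lt_of_mem_descSet π hj
  rw [Fin.sum_univ_eq_sum_range (fun k => if k < j then 1 else 0), sum_boole,
    show {x ∈ range n | x < j} = range j by ext; simp; omega, card_range, Nat.cast_id]

end Descents

section Compatible

variable {n : ℕ} (π : Equiv.Perm (Fin n))

def IsDescentCompatible (s : Fin n → ℕ) : Prop :=
  ∀ k (hk : k + 1 < n), s ⟨k + 1, hk⟩ + (if k + 1 ∈ descSet n π then 1 else 0) ≤ s ⟨k, by omega⟩

theorem sort_toDual_eq_iff (f : Fin n → ℕ) :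
    Tuple.sort (OrderDual.toDual ∘ f) = π ↔ IsDescentCompatible π (f ∘ π) := by
  rw [eq_comm, Tuple.eq_sort_iff', strictMono_fin_iff_lt_succ]
  refine forall₂_congr fun k hk => ?_
  change toLex (OrderDual.toDual (f (π ⟨k, _⟩)), π ⟨k, _⟩) <
    toLex (OrderDual.toDual (f (π ⟨k + 1, hk⟩)), π ⟨k + 1, hk⟩) ↔ _
  have hne : π ⟨k, by omega⟩ ≠ π ⟨k + 1, hk⟩ := by simp [Fin.ext_iff]
  rw [Prod.Lex.toLex_lt_toLex, OrderDual.toDual_lt_toDual, OrderDual.toDual_inj,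
    Function.comp_apply, Function.comp_apply]
  split_ifs with hdesc <;> rw [succ_mem_descSet_iff π hk] at hdesc
  · simp [hdesc.not_gt]
  · simp [lt_of_le_of_ne (not_lt.1 hdesc) hne, le_iff_lt_or_eq, eq_comm]

theorem isDescentCompatible_add_descentsAfter_iff (h : Fin n → ℕ) :
    IsDescentCompatible π (fun k => h k + descentsAfter π k) ↔ Antitone h := by
  rw [antitone_fin_iff_succ_le]
  refine forall₂_congr fun k hk => ?_
  simp only [descentsAfter_eq_succ_add π k]
  omega

theorem descentsAfter_le_of_isDescentCompatible {s : Fin n → ℕ} (hs : IsDescentCompatible π s)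
    (k : Fin n) : descentsAfter π k ≤ s k := by
  suffices ∀ m k (hk : k < n), k + m + 1 = n → descentsAfter π k ≤ s ⟨k, hk⟩ from
    this (n - k - 1) k k.2 (by omega)
  intro m
  induction m with
  | zero => intro k hk hkn; simp [descentsAfter_eq_zero π (k := k) (by omega)]
  | succ m ih =>
    intro k hk hkn
    have hstep := hs k (by omega)
    have hnext := ih (k + 1) (by omega) (by omega)
    rw [descentsAfter_eq_succ_add π k]
    omega

theorem maj_le_sum_of_isDescentCompatible {s : Fin n → ℕ} (hs : IsDescentCompatible π s) :
    maj n π ≤ ∑ i, s i :=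
  sum_descentsAfter π ▸ sum_le_sum fun k _ => descentsAfter_le_of_isDescentCompatible π hs k

theorem des_le_of_isDescentCompatible {s : Fin n → ℕ} {a : ℕ} (hs : IsDescentCompatible π s)
    (ha : ∀ i, s i ≤ a) : des n π ≤ a := by
  cases n with
  | zero => simp [des, descSet]
  | succ m =>
    rw [← descentsAfter_zero]
    exact (descentsAfter_le_of_isDescentCompatible π hs 0).trans (ha 0)

open Classical in
theorem card_filter_sort_toDual_eq (a b : ℕ) :
    #{f ∈ boundedSeqs n a b | Tuple.sort (OrderDual.toDual ∘ f) = π} =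
      #{s ∈ boundedSeqs n a b | IsDescentCompatible π s} := by
  refine card_nbij' (· ∘ π) (· ∘ ⇑π⁻¹) ?_ ?_ ?_ ?_
  · intro f hf
    simp only [mem_coe, mem_filter, mem_boundedSeqs, sort_toDual_eq_iff] at hf ⊢
    exact ⟨⟨fun i => hf.1.1 _, (Equiv.sum_comp π f).trans hf.1.2⟩, hf.2⟩
  · intro s hs
    simp only [mem_coe, mem_filter, mem_boundedSeqs, sort_toDual_eq_iff] at hs ⊢
    refine ⟨⟨fun i => hs.1.1 _, (Equiv.sum_comp π⁻¹ s).trans hs.1.2⟩, ?_⟩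
    simpa [Function.comp_def] using hs.2
  · intro f _
    simp [Function.comp_def]
  · intro s _
    simp [Function.comp_def]

theorem sum_add_descentsAfter (h : Fin n → ℕ) :
    ∑ k, (h k + descentsAfter π k) = ∑ k, h k + maj n π := by
  rw [sum_add_distrib, sum_descentsAfter]

open Classical in
theorem card_filter_isDescentCompatible (a b : ℕ) :
    #{s ∈ boundedSeqs n a b | IsDescentCompatible π s} =
      if des n π ≤ a ∧ maj n π ≤ b then #(antitoneSeqs n (a - des n π) (b - maj n π)) else 0 := by
  split_ifs with hab
  · refine card_nbij' (fun s k => s k - descentsAfter π k) (fun h k => h k + descentsAfter π k)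
      ?_ ?_ ?_ ?_
    · intro s hs
      simp only [mem_coe, mem_filter, mem_boundedSeqs, mem_antitoneSeqs] at hs ⊢
      obtain ⟨⟨hle, hsum⟩, hs⟩ := hs
      have hdesc := descentsAfter_le_of_isDescentCompatible π hs
      have hsplit : s = fun k => (s k - descentsAfter π k) + descentsAfter π k :=
        funext fun k => (Nat.sub_add_cancel (hdesc k)).symm
      have hanti := (isDescentCompatible_add_descentsAfter_iff π _).1 (hsplit ▸ hs)
      refine ⟨hanti, fun k => ?_, ?_⟩
      · have h0 := hanti (show (⟨0, k.pos⟩ : Fin n) ≤ k from Nat.zero_le _)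
        simp only [descentsAfter_zero] at h0
        have := hle ⟨0, k.pos⟩
        omega
      · have := sum_add_descentsAfter π fun k => s k - descentsAfter π k
        rw [← hsplit, hsum] at this
        omega
    · intro h hh
      simp only [mem_coe, mem_filter, mem_boundedSeqs, mem_antitoneSeqs] at hh ⊢
      obtain ⟨hanti, hle, hsum⟩ := hh
      refine ⟨⟨fun k => ?_, by rw [sum_add_descentsAfter]; omega⟩,
        (isDescentCompatible_add_descentsAfter_iff π h).2 hanti⟩
      have := descentsAfter_le_des π k
      have := hle k
      omega
    · intro s hs
      simp only [mem_coe, mem_filter] at hs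
      exact funext fun k => Nat.sub_add_cancel (descentsAfter_le_of_isDescentCompatible π hs.2 k)
    · intro h _
      exact funext fun k => Nat.add_sub_cancel (h k) _
  · refine card_eq_zero.2 <| filter_eq_empty_iff.2 fun s hs hcomp => hab ?_
    obtain ⟨hle, hsum⟩ := mem_boundedSeqs.1 hs
    exact ⟨des_le_of_isDescentCompatible π hcomp hle,
      hsum ▸ maj_le_sum_of_isDescentCompatible π hcomp⟩

end Compatible

theorem card_boundedSeqs (n a b : ℕ) :
    #(boundedSeqs n a b) = ∑ π : Equiv.Perm (Fin n),
      if des n π ≤ a ∧ maj n π ≤ b then #(antitoneSeqs n (a - des n π) (b - maj n π)) else 0 := by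
  classical
  rw [card_eq_sum_card_fiberwise (f := fun f => Tuple.sort (OrderDual.toDual ∘ f)) (t := univ)
    fun _ _ => mem_univ _]
  exact sum_congr rfl fun π _ => by
    rw [card_filter_sort_toDual_eq, card_filter_isDescentCompatible]

theorem coeff_geom_sum_pow (n a b : ℕ) :
    ((∑ t ∈ range (a + 1), (Polynomial.X : Polynomial ℤ) ^ t) ^ n).coeff b =
      #(boundedSeqs n a b) := by
  rw [sum_pow', Polynomial.finsetSum_coeff]
  simp only [prod_pow_eq_pow_sum, Polynomial.coeff_X_pow, sum_boole, boundedSeqs, eq_comm (a := b)]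

theorem carlitzSum_eq_mk₂ (n : ℕ) :
    carlitzSum n = mk₂ fun a b => (#(boundedSeqs n a b) : ℤ) := by
  ext d
  exact coeff_geom_sum_pow n (d 0) (d 1)

theorem carlitzSum_eq_mul (n : ℕ) :
    carlitzSum n =
      (∑ π : Equiv.Perm (Fin n), (X 0 : MvPowerSeries (Fin 2) ℤ) ^ des n π * X 1 ^ maj n π) *
        antitoneSeqsSeries n := by
  ext d
  rw [carlitzSum_eq_mk₂, coeff_mk₂, card_boundedSeqs, sum_mul, map_sum]
  simp only [antitoneSeqsSeries, coeff_X_pow_mul_X_pow_mul_mk₂]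
  push_cast
  rfl

end Carlitz

/-- Carlitz: `C_n(x,q) = ∏_{i=0}^n (1 - x q^i) · ∑_{j=1}^∞ [j]_q^n x^{j-1}` in `ℤ[[x,q]]`. -/
theorem stmt_5 (n : ℕ) :
    ∑ π : Equiv.Perm (Fin n),
        (MvPowerSeries.X 0 : MvPowerSeries (Fin 2) ℤ) ^ des n π * MvPowerSeries.X 1 ^ maj n π =
      (∏ i ∈ Finset.range (n + 1),
          (1 - (MvPowerSeries.X 0 : MvPowerSeries (Fin 2) ℤ) * MvPowerSeries.X 1 ^ i)) *
        carlitzSum n := by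
  rw [Carlitz.carlitzSum_eq_mul, mul_left_comm, Carlitz.prod_one_sub_mul_antitoneSeqsSeries,
    mul_one]
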